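/- Let d ≥ 1, T > 0, and let p, q > 2 satisfy d/p + 2/q < 1. Then there exists a constant C > 0, depending only on T, d, p, q, such that for every Borel measurable f : [0,T] × ℝ^d → ℝ^d with ‖f‖_{L^q_p} < ∞ one has sup_{x ∈ ℝ^d} ∫_0^T (2πs)^{−d/2} ∫_{ℝ^d} |f(s,z)|^2 e^{−|z−x|^2/(2s)} dz ds ≤ C · ‖f‖_{L^q_p}^2; equivalently, if (B_t) is a d-dimensional Brownian motion, then sup_{x ∈ ℝ^d} E[ ∫_0^T |f(s, x + B_s)|^2 ds ] ≤ C · ‖f‖_{L^q_p}^2. -/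

import Mathlib

open MeasureTheory ProbabilityTheory Filter
open scoped ENNReal NNReal Topology

noncomputable section

/-- `Euc d` is `ℝ^d` with the Euclidean norm. -/
abbrev Euc (d : ℕ) := EuclideanSpace ℝ (Fin d)

/-- `B` is a `d`-dimensional Brownian motion on `[0,T]` with respect to `μ`:
continuous paths, `B 0 = 0`, and for any monotone family of times in `[0,T]` the
coordinates of the increments are independent, each increment coordinate being
a centered Gaussian of variance `t - s`. -/
def IsBrownianMotion {Ω : Type*} [MeasurableSpace Ω] (μ : Measure Ω) (d : ℕ) (T : ℝ)
    (B : ℝ → Ω → Euc d) : Prop :=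
  (∀ ω, ContinuousOn (fun t => B t ω) (Set.Icc 0 T)) ∧
  (∀ ω, B 0 ω = 0) ∧
  (∀ t, Measurable (B t)) ∧
  (∀ (n : ℕ) (t : Fin (n + 1) → ℝ), Monotone t → (∀ i, t i ∈ Set.Icc (0 : ℝ) T) →
    iIndepFun
      (fun p : Fin n × Fin d => fun ω =>
        (B (t p.1.succ) ω - B (t p.1.castSucc) ω) p.2) μ) ∧
  (∀ s t : ℝ, 0 ≤ s → s ≤ t → t ≤ T → ∀ i : Fin d,
    μ.map (fun ω => (B t ω - B s ω) i) = gaussianReal 0 (Real.toNNReal (t - s)))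

/-- The mixed norm `‖f‖_{L^q_p}` (as an extended nonnegative real). -/
def mixedNorm (d : ℕ) (T p q : ℝ) (f : ℝ → Euc d → Euc d) : ℝ≥0∞ :=
  (∫⁻ t in Set.Ioc (0 : ℝ) T,
      (∫⁻ x : Euc d, ENNReal.ofReal (‖f t x‖ ^ p)) ^ (q / p)) ^ (1 / q)

/-- The `μ`-augmented natural filtration of `B` at time `t`. -/
def augFiltration {Ω : Type*} [MeasurableSpace Ω] (μ : Measure Ω) {d : ℕ}
    (B : ℝ → Ω → Euc d) (t : ℝ) : MeasurableSpace Ω :=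
  (⨆ s ∈ Set.Icc (0 : ℝ) t, MeasurableSpace.comap (B s) inferInstance) ⊔
    MeasurableSpace.generateFrom {N : Set Ω | μ N = 0}

/-- `X` is a strong solution of `dX_t = b(t, X_t) dt + dB_t`, `X_0 = x`, on `[0,T]`:
a continuous process, adapted to the `μ`-augmented natural filtration of `B`, such that
a.s. `∫_0^T |b(s,X_s)| ds < ∞` and `X_t = x + ∫_0^t b(s,X_s) ds + B_t` for all `t ∈ [0,T]`. -/
def IsStrongSolution {Ω : Type*} [MeasurableSpace Ω] (μ : Measure Ω) {d : ℕ} (T : ℝ)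
    (B : ℝ → Ω → Euc d) (b : ℝ → Euc d → Euc d) (x : Euc d) (X : ℝ → Ω → Euc d) : Prop :=
  (∀ ω, ContinuousOn (fun t => X t ω) (Set.Icc 0 T)) ∧
  (∀ t ∈ Set.Icc (0 : ℝ) T, Measurable[augFiltration μ B t] (X t)) ∧
  (∀ᵐ ω ∂μ, IntegrableOn (fun s => b s (X s ω)) (Set.Icc 0 T) ∧
    ∀ t ∈ Set.Icc (0 : ℝ) T,
      X t ω = x + (∫ s in Set.Icc (0 : ℝ) t, b s (X s ω)) + B t ω)

/-! Fix `s > 0`. Hölder's inequality in space with exponents `p/2` and `r = (p/2)'` bounds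
the inner integral by `‖f(s)‖_p²` times the `L^r` norm of the heat kernel, which the Gaussian
integral evaluates to a constant times `s^{-d/p}`. Hölder's inequality in time with exponents
`q/2` and `q' = (q/2)'` then bounds the whole by `‖f‖²_{L^q_p}` times the `L^{q'}(0,T)` norm
of `s^{-d/p}`, which is finite because `(d/p) q' < 1` is exactly `d/p + 2/q < 1`. -/

open Real Set Module

section HeatKernel

variable {V : Type*} [NormedAddCommGroup V] [InnerProductSpace ℝ V] [FiniteDimensional ℝ V]
  [MeasurableSpace V] [BorelSpace V]

theorem lintegral_ofReal_exp_neg_mul_norm_sub_sq {b : ℝ} (hb : 0 < b) (x : V) :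
    ∫⁻ z : V, ENNReal.ofReal (exp (-b * ‖z - x‖ ^ 2)) =
      ENNReal.ofReal ((π / b) ^ ((finrank ℝ V : ℝ) / 2)) := by
  have hint : Integrable fun z : V => exp (-b * ‖z‖ ^ 2) :=
    .of_integral_ne_zero <| by rw [GaussianFourier.integral_rexp_neg_mul_sq_norm hb]; positivity
  rw [lintegral_sub_right_eq_self (fun z => ENNReal.ofReal (exp (-b * ‖z‖ ^ 2))) x,
    ← ofReal_integral_eq_lintegral_ofReal hint (.of_forall fun _ => (exp_pos _).le),
    GaussianFourier.integral_rexp_neg_mul_sq_norm hb]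

variable (V) in
def heatKernel (s : ℝ) (v : V) : ℝ :=
  (2 * π * s) ^ (-(finrank ℝ V : ℝ) / 2) * exp (-‖v‖ ^ 2 / (2 * s))

def heatKernelLpNorm (n : ℕ) (r s : ℝ) : ℝ :=
  (2 * π * s) ^ (-(n / 2 * (1 - r⁻¹))) * r ^ (-(n / (2 * r)))

theorem lintegral_heatKernel_rpow {s r : ℝ} (hs : 0 < s) (hr : 0 < r) (x : V) :
    (∫⁻ z, ENNReal.ofReal (heatKernel V s (z - x)) ^ r) ^ (1 / r) =
      ENNReal.ofReal (heatKernelLpNorm (finrank ℝ V) r s) := by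
  have h2πs : 0 < 2 * π * s := by positivity
  have hpow : ∀ z : V, ENNReal.ofReal (heatKernel V s (z - x)) ^ r =
      ENNReal.ofReal ((2 * π * s) ^ (-(finrank ℝ V : ℝ) / 2 * r)) *
        ENNReal.ofReal (exp (-(r / (2 * s)) * ‖z - x‖ ^ 2)) := by
    intro z
    rw [heatKernel, ENNReal.ofReal_rpow_of_nonneg (by positivity) hr.le,
      mul_rpow (by positivity) (exp_pos _).le, ← rpow_mul h2πs.le, ← exp_mul,
      ENNReal.ofReal_mul (by positivity)]
    congr 3
    ring
  have hgauss : π / (r / (2 * s)) = 2 * π * s / r := by field_simp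
  simp_rw [hpow]
  rw [lintegral_const_mul' _ _ ENNReal.ofReal_ne_top,
    lintegral_ofReal_exp_neg_mul_norm_sub_sq (by positivity) x, hgauss,
    ← ENNReal.ofReal_mul (by positivity),
    ENNReal.ofReal_rpow_of_nonneg (by positivity) (by positivity),
    mul_rpow (by positivity) (by positivity), ← rpow_mul h2πs.le, ← rpow_mul (by positivity),
    div_rpow h2πs.le hr.le, heatKernelLpNorm]
  congr 1
  rw [← mul_div_assoc, ← rpow_add h2πs, rpow_neg hr.le, ← div_eq_mul_inv]
  congr 2
  · field_simp
    ring
  · field_simp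

theorem lintegral_heatKernel_mul_le {a r s : ℝ} (har : a.HolderConjugate r) (hs : 0 < s)
    (x : V) {u : V → ℝ≥0∞} (hu : AEMeasurable u) :
    ∫⁻ z, ENNReal.ofReal (heatKernel V s (z - x)) * u z ≤
      ENNReal.ofReal (heatKernelLpNorm (finrank ℝ V) r s) * (∫⁻ z, u z ^ a) ^ (1 / a) := by
  have hmeas : Measurable fun z : V => ENNReal.ofReal (heatKernel V s (z - x)) := by
    unfold heatKernel; fun_prop
  rw [← lintegral_heatKernel_rpow hs har.symm.pos x]
  exact ENNReal.lintegral_mul_le_Lp_mul_Lq volume har.symm hmeas.aemeasurable hu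

theorem lintegral_heatKernel_mul_norm_sq_le {E : Type*} [NormedAddCommGroup E] [MeasurableSpace E]
    [OpensMeasurableSpace E] {p r s : ℝ} (hpr : (p / 2).HolderConjugate r) (hs : 0 < s) (x : V)
    {g : V → E} (hg : Measurable g) :
    ∫⁻ z, ENNReal.ofReal ((2 * π * s) ^ (-(finrank ℝ V : ℝ) / 2) * ‖g z‖ ^ 2 *
        exp (-‖z - x‖ ^ 2 / (2 * s))) ≤
      ENNReal.ofReal (heatKernelLpNorm (finrank ℝ V) r s) *
        (∫⁻ z, ENNReal.ofReal (‖g z‖ ^ p)) ^ (2 / p) := by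
  have hsplit : ∀ z, ENNReal.ofReal ((2 * π * s) ^ (-(finrank ℝ V : ℝ) / 2) * ‖g z‖ ^ 2 *
      exp (-‖z - x‖ ^ 2 / (2 * s))) =
        ENNReal.ofReal (heatKernel V s (z - x)) * ENNReal.ofReal (‖g z‖ ^ 2) := by
    intro z
    rw [heatKernel, ← ENNReal.ofReal_mul (by positivity)]
    ring_nf
  have hpow : ∀ z, ENNReal.ofReal (‖g z‖ ^ 2) ^ (p / 2) = ENNReal.ofReal (‖g z‖ ^ p) := by
    intro z
    rw [ENNReal.ofReal_rpow_of_nonneg (by positivity) (by linarith [hpr.lt]),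
      ← rpow_natCast, ← rpow_mul (norm_nonneg _)]
    ring_nf
  have := lintegral_heatKernel_mul_le hpr hs x (hg.norm.pow_const 2).ennreal_ofReal.aemeasurable
  simpa only [hsplit, hpow, one_div_div] using this

end HeatKernel

theorem lintegral_ofReal_mul_rpow_neg_rpow_lt_top {c γ a T : ℝ} (hc : 0 ≤ c) (ha : 0 ≤ a)
    (hγa : γ * a < 1) :
    ∫⁻ s in Ioc 0 T, ENNReal.ofReal (c * s ^ (-γ)) ^ a < ⊤ := by
  have hint : IntegrableOn (fun s : ℝ => c ^ a * s ^ (-(γ * a))) (Ioc 0 T) :=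
    ((intervalIntegral.intervalIntegrable_rpow' (by linarith)).1).const_mul _
  refine lt_of_eq_of_lt (setLIntegral_congr_fun measurableSet_Ioc fun s hs => ?_)
    hint.lintegral_lt_top
  rw [ENNReal.ofReal_rpow_of_nonneg (mul_nonneg hc (rpow_nonneg hs.1.le _)) ha,
    mul_rpow hc (rpow_nonneg hs.1.le _), ← rpow_mul hs.1.le, neg_mul]

theorem lintegral_heatKernelLpNorm_rpow_lt_top {n : ℕ} {r a T : ℝ} (hr : 0 ≤ r) (ha : 0 ≤ a)
    (h : n / 2 * (1 - r⁻¹) * a < 1) :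
    ∫⁻ s in Ioc 0 T, ENNReal.ofReal (heatKernelLpNorm n r s) ^ a < ⊤ := by
  have hfactor : ∀ s ∈ Ioc 0 T, ENNReal.ofReal (heatKernelLpNorm n r s) ^ a =
      ENNReal.ofReal ((2 * π) ^ (-(n / 2 * (1 - r⁻¹))) * r ^ (-(n / (2 * r))) *
        s ^ (-(n / 2 * (1 - r⁻¹)))) ^ a := by
    intro s hs
    rw [heatKernelLpNorm, mul_rpow (by positivity) hs.1.le]
    ring_nf
  rw [setLIntegral_congr_fun measurableSet_Ioc hfactor]
  exact lintegral_ofReal_mul_rpow_neg_rpow_lt_top (by positivity) ha h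

theorem lintegral_mul_rpow_le_mixedNorm_sq {d : ℕ} {T p q q' : ℝ}
    (hq : (q / 2).HolderConjugate q')
    {g : ℝ → ℝ≥0∞} (hg : Measurable g) {f : ℝ → Euc d → Euc d}
    (hf : Measurable (Function.uncurry f)) :
    ∫⁻ s in Ioc 0 T, g s * (∫⁻ z, ENNReal.ofReal (‖f s z‖ ^ p)) ^ (2 / p) ≤
      (∫⁻ s in Ioc 0 T, g s ^ q') ^ (1 / q') * mixedNorm d T p q f ^ 2 := by
  have hF : Measurable fun s => ∫⁻ z, ENNReal.ofReal (‖f s z‖ ^ p) :=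
    Measurable.lintegral_prod_right' (hf.norm.pow_const p).ennreal_ofReal
  have hexp : ∀ s, ((∫⁻ z, ENNReal.ofReal (‖f s z‖ ^ p)) ^ (2 / p)) ^ (q / 2) =
      (∫⁻ z, ENNReal.ofReal (‖f s z‖ ^ p)) ^ (q / p) := by
    intro s
    rw [← ENNReal.rpow_mul]
    ring_nf
  calc _ ≤ (∫⁻ s in Ioc 0 T, g s ^ q') ^ (1 / q') *
        (∫⁻ s in Ioc 0 T, ((∫⁻ z, ENNReal.ofReal (‖f s z‖ ^ p)) ^ (2 / p)) ^ (q / 2)) ^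
          (1 / (q / 2)) :=
      ENNReal.lintegral_mul_le_Lp_mul_Lq _ hq.symm hg.aemeasurable (hF.pow_const _).aemeasurable
    _ = _ := by
      rw [mixedNorm, ← ENNReal.rpow_natCast, ← ENNReal.rpow_mul]
      simp_rw [hexp]
      ring_nf

theorem heat_kernel_uniform_L2_bound_general
    (d : ℕ) (T : ℝ)
    (p q : ℝ) (hp : 2 < p) (hq : 2 < q) (hpq : (d : ℝ) / p + 2 / q < 1) :
    ∃ C : ℝ, 0 < C ∧
      ∀ f : ℝ → Euc d → Euc d, Measurable (Function.uncurry f) →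
        mixedNorm d T p q f < ⊤ →
        ∀ x : Euc d,
          ∫⁻ s in Set.Ioc (0 : ℝ) T, ∫⁻ z : Euc d,
              ENNReal.ofReal
                ((2 * Real.pi * s) ^ (-(d : ℝ) / 2) * ‖f s z‖ ^ 2 *
                  Real.exp (-‖z - x‖ ^ 2 / (2 * s)))
            ≤ ENNReal.ofReal C * (mixedNorm d T p q f) ^ 2 := by
  set r := (p / 2).conjExponent
  set q' := (q / 2).conjExponent
  have hpr : (p / 2).HolderConjugate r := .conjExponent (by linarith)
  have hqq' : (q / 2).HolderConjugate q' := .conjExponent (by linarith)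
  have hweight : d / 2 * (1 - r⁻¹) * q' < 1 := by
    have hr := hpr.inv_add_inv_eq_one
    have hq' := hqq'.inv_add_inv_eq_one
    rw [inv_div] at hr hq'
    rw [← lt_div_iff₀ hqq'.symm.pos, one_div]
    calc (d : ℝ) / 2 * (1 - r⁻¹) = d / p := by rw [← hr]; ring
      _ < q'⁻¹ := by linarith
  set K := (∫⁻ s in Ioc 0 T, ENNReal.ofReal (heatKernelLpNorm d r s) ^ q') ^ (1 / q')
  have hK : K ≠ ⊤ := (ENNReal.rpow_lt_top_of_nonneg (one_div_nonneg.mpr hqq'.symm.nonneg)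
    (lintegral_heatKernelLpNorm_rpow_lt_top hpr.symm.nonneg hqq'.symm.nonneg hweight).ne).ne
  refine ⟨K.toReal + 1, by positivity, fun f hf _ x => ?_⟩
  calc _ ≤ ∫⁻ s in Ioc 0 T, ENNReal.ofReal (heatKernelLpNorm d r s) *
        (∫⁻ z, ENNReal.ofReal (‖f s z‖ ^ p)) ^ (2 / p) := by
        refine setLIntegral_mono' measurableSet_Ioc fun s hs => ?_
        simpa only [finrank_euclideanSpace_fin] using
          lintegral_heatKernel_mul_norm_sq_le hpr hs.1 x hf.of_uncurry_left
    _ ≤ K * mixedNorm d T p q f ^ 2 :=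
        lintegral_mul_rpow_le_mixedNorm_sq hqq' (by unfold heatKernelLpNorm; fun_prop) hf
    _ ≤ ENNReal.ofReal (K.toReal + 1) * mixedNorm d T p q f ^ 2 := by
        gcongr
        exact ENNReal.le_ofReal_iff_toReal_le hK (by positivity) |>.mpr (by linarith)

/-- for `d/p + 2/q < 1` there is a constant `C` such that, uniformly
in `x ∈ ℝ^d`, the time-integral of `|f(s,·)|^2` against the heat kernel centred
at `x` is bounded by `C ‖f‖_{L^q_p}^2`. -/
theorem heat_kernel_uniform_L2_bound
    (d : ℕ) (hd : 1 ≤ d) (T : ℝ) (hT : 0 < T)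
    (p q : ℝ) (hp : 2 < p) (hq : 2 < q) (hpq : (d : ℝ) / p + 2 / q < 1) :
    ∃ C : ℝ, 0 < C ∧
      ∀ f : ℝ → Euc d → Euc d, Measurable (Function.uncurry f) →
        mixedNorm d T p q f < ⊤ →
        ∀ x : Euc d,
          ∫⁻ s in Set.Ioc (0 : ℝ) T, ∫⁻ z : Euc d,
              ENNReal.ofReal
                ((2 * Real.pi * s) ^ (-(d : ℝ) / 2) * ‖f s z‖ ^ 2 *
                  Real.exp (-‖z - x‖ ^ 2 / (2 * s)))
            ≤ ENNReal.ofReal C * (mixedNorm d T p q f) ^ 2 :=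
  heat_kernel_uniform_L2_bound_general d T p q hp hq hpq
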